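/- arXiv:2510.02620 — 6 statements merged into one kernel-verified Lean document; each statement's English description precedes it below -/
import Mathlib

section
/- Let D = (V, E) be a digraph and let u, v, w, a, b, c ∈ V. If OPA(u; v; w) and OPA(a; b; c) both hold, then u = a if and only if (v = b and w = c). -/
/-- The set of in-neighbors (`D`-elements) of `u` in the digraph with arrow relation `E`. -/
def inNbrs {V : Type*} (E : V → V → Prop) (u : V) : Set V := {v | E v u}

/-- `SIN E u v`: `u` is the unique vertex whose set of in-neighbors is `{v}`. -/
def SIN {V : Type*} (E : V → V → Prop) (u v : V) : Prop :=
  inNbrs E u = {v} ∧ ∀ w, inNbrs E w = {v} → w = u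

/-- `DOU E u v w`: `u` is the unique vertex whose set of in-neighbors is `{v, w}`. -/
def DOU {V : Type*} (E : V → V → Prop) (u v w : V) : Prop :=
  inNbrs E u = {v, w} ∧ ∀ t, inNbrs E t = {v, w} → t = u

/-- `OPA E u v w`: `u` is an ordered pair `⟨v, w⟩_D`. -/
def OPA {V : Type*} (E : V → V → Prop) (u v w : V) : Prop :=
  ∃ d e, SIN E d v ∧ DOU E e v w ∧ DOU E u d e

/-- `REL E u v`: `u` is a `D`-relation from `v` to `P(v)`. -/
def REL {V : Type*} (E : V → V → Prop) (u v : V) : Prop :=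
  ∀ w ∈ inNbrs E u, ∃ w₁ ∈ inNbrs E v, ∃ w₂,
    inNbrs E w₂ ⊆ inNbrs E v ∧ OPA E w w₁ w₂

/-- `FUN E u v`: `u` is a `D`-function from `v` to `P(v)`. -/
def FUN {V : Type*} (E : V → V → Prop) (u v : V) : Prop :=
  REL E u v ∧ ∀ w ∈ inNbrs E v, ∃! p, p ∈ inNbrs E u ∧ ∃ w', OPA E p w w'

/-- `SUR E u v`: `u` is a `D`-surjection from `v` to `P(v)`. -/
def SUR {V : Type*} (E : V → V → Prop) (u v : V) : Prop :=
  FUN E u v ∧ ∀ w', inNbrs E w' ⊆ inNbrs E v →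
    ∃ p ∈ inNbrs E u, ∃ w, OPA E p w w'

/-- If `OPA(u; v; w)` and `OPA(a; b; c)` hold in a digraph `D = (V, E)`
(`V` nonempty), then `u = a` iff (`v = b` and `w = c`). -/
theorem opa_unique {V : Type*} [Nonempty V] (E : V → V → Prop)
    (u v w a b c : V) (h₁ : OPA E u v w) (h₂ : OPA E a b c) :
    u = a ↔ v = b ∧ w = c := by
  obtain ⟨d, e, ⟨hdv, hdu⟩, ⟨hevw, heu⟩, ⟨hude, huu⟩⟩ := h₁
  obtain ⟨d', e', ⟨hdb, hdu'⟩, ⟨hebc, heu'⟩, ⟨hade, hau'⟩⟩ := h₂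
  constructor
  · rintro rfl
    have hset : ({d, e} : Set V) = {d', e'} := hude ▸ hade
    rcases Set.pair_eq_pair_iff.mp hset with ⟨hd, he⟩ | ⟨hd, he⟩
    · subst hd; subst he
      have hv : ({v} : Set V) = {b} := hdv ▸ hdb
      have hvb : v = b := Set.singleton_eq_singleton_iff.mp hv
      have hvw : ({v, w} : Set V) = {b, c} := hevw ▸ hebc
      subst hvb
      rcases Set.pair_eq_pair_iff.mp hvw with ⟨_, hc⟩ | ⟨hd2, he2⟩
      · exact ⟨rfl, hc⟩
      · exact ⟨rfl, he2.trans hd2⟩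
    · subst hd; subst he
      -- d = e', e = d' ; inNbrs d = {v} = {b, c}, inNbrs e = {v, w} = {b}
      have h1 : ({v} : Set V) = {b, c} := hdv ▸ hebc
      have h2 : ({v, w} : Set V) = {b} := hevw ▸ hdb
      have hbv : b = v := (h1 ▸ (Set.mem_insert b {c}) : b ∈ ({v} : Set V))
      have hcv : c = v := (h1 ▸ (Set.mem_insert_of_mem b rfl) : c ∈ ({v} : Set V))
      have hwb : w = b := (h2 ▸ (Set.mem_insert_of_mem v rfl) : w ∈ ({b} : Set V))
      exact ⟨hbv.symm, hwb.trans (hbv.trans hcv.symm)⟩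
  · rintro ⟨rfl, rfl⟩
    have hdd : d' = d := hdu d' hdb
    have hee : e' = e := heu e' hebc
    subst hdd; subst hee
    exact hau' u hude
end

section
/- Cantor's theorem holds in every extensive digraph: if D = (V, E) is an extensive digraph, then for no u, v ∈ V does SUR(v; u) hold. -/
open FirstOrder Language

/-- A digraph `(V, E)` viewed as a structure in the language with a single
binary relation symbol (interpreted as `E`). -/
def digraphStructure {V : Type*} (E : V → V → Prop) : Language.graph.Structure V where
  RelMap | .adj => fun x => E (x 0) (x 1)

/-- The atomic formula `v_a ∈ v_b` (with de Bruijn variables `a`, `b`). -/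
def memBF {k : ℕ} (a b : Fin k) : Language.graph.BoundedFormula Empty k :=
  Relations.boundedFormula₂ adj (&a) (&b)

/-- The instance of the axiom schema of specification determined by `n ≥ 1` and a
formula `ψ` with free variables among `v₁, …, v_{n+2}`:
`∀v₁ … ∀v_n ∀v_{n+1} ∃v_{n+3} ∀v_{n+2} ((v_{n+2} ∈ v_{n+3}) ↔ ((v_{n+2} ∈ v_{n+1}) ∧ ψ))`.
Here the variable `v_t` for `1 ≤ t ≤ n+1` is the de Bruijn variable `t - 1`, while
`v_{n+3}` is de Bruijn variable `n+1` and `v_{n+2}` is de Bruijn variable `n+2`. -/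
def specSentence (n : ℕ) (ψ : Language.graph.Formula (Fin (n + 2))) :
    Language.graph.Sentence :=
  let g : Fin (n + 2) → Empty ⊕ Fin (n + 3) := fun t =>
    if _ : (t : ℕ) < n + 1 then Sum.inr ⟨(t : ℕ), by omega⟩
    else Sum.inr ⟨n + 2, by omega⟩
  let ψ' : Language.graph.BoundedFormula Empty (n + 3) := BoundedFormula.relabel g ψ
  let body : Language.graph.BoundedFormula Empty (n + 3) :=
    BoundedFormula.iff (memBF ⟨n + 2, by omega⟩ ⟨n + 1, by omega⟩)
      ((memBF ⟨n + 2, by omega⟩ ⟨n, by omega⟩) ⊓ ψ')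
  BoundedFormula.alls (BoundedFormula.ex (BoundedFormula.all body))

/-- The axiom schema of specification holds in the digraph `(V, E)`. -/
def Extensive {V : Type*} (E : V → V → Prop) : Prop :=
  ∀ n : ℕ, 1 ≤ n → ∀ ψ : Language.graph.Formula (Fin (n + 2)),
    letI := digraphStructure E
    (specSentence n ψ).Realize V

/-!
Cantor's diagonal argument carried out inside `D`. For a `D`-surjection `f` from `u` onto
its "power set", specification applied to the formula "`x ∉ f(x)`" (with parameter `f`)
yields a vertex `b` whose `D`-elements are the `x ∈ u` with `x ∉ f(x)`. By surjectivity
`⟨w, b⟩ ∈ f` for some `w`; since ordered pairs determine their components and `f` is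
functional, `f(w) = b`, so `w ∈ b ↔ w ∉ b`.
-/

theorem Set.eq_and_eq_of_kuratowski {α : Type*} {a b a' b' : α}
    (h : ({{a}, {a, b}} : Set (Set α)) = {{a'}, {a', b'}}) : a = a' ∧ b = b' := by
  simp only [Set.pair_eq_pair_iff, Set.singleton_eq_singleton_iff] at h
  rcases h with ⟨rfl, h⟩ | ⟨h₁, h₂⟩
  · simp only [true_and] at h
    exact ⟨rfl, h.elim id fun ⟨hab', hba⟩ => hba.trans hab'⟩
  · have ha' : a' ∈ ({a} : Set α) := h₁ ▸ Set.mem_insert a' {b'}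
    have hb' : b' ∈ ({a} : Set α) := h₁ ▸ Set.mem_insert_of_mem a' rfl
    have hb : b ∈ ({a'} : Set α) := h₂ ▸ Set.mem_insert_of_mem a rfl
    rw [Set.mem_singleton_iff] at ha' hb' hb
    exact ⟨ha'.symm, hb.trans (ha'.trans hb'.symm)⟩

section Cantor

variable {V : Type*} {E : V → V → Prop}

theorem OPA.inj {p a b a' b' : V} (h : OPA E p a b) (h' : OPA E p a' b') :
    a = a' ∧ b = b' := by
  obtain ⟨d, e, hd, he, hp⟩ := h
  obtain ⟨d', e', hd', he', hp'⟩ := h'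
  apply Set.eq_and_eq_of_kuratowski
  have := congrArg (inNbrs E '' ·) (hp.1.symm.trans hp'.1)
  simpa only [Set.image_pair, hd.1, he.1, hd'.1, he'.1] using this

variable (E) in
/-- `x ∉ f(x)`, read as "`x ∉ y` whenever `⟨x, y⟩ ∈ f`". -/
def Diagonal (f x : V) : Prop :=
  ∀ p y, E p f → OPA E p x y → ¬ E x y

theorem not_SUR_of_diagonal {u f b : V} (hb : ∀ x, E x b ↔ E x u ∧ Diagonal E f x) :
    ¬ SUR E f u := by
  rintro ⟨⟨hrel, hfun⟩, hsurj⟩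
  obtain ⟨p, hpf, w, hpwb⟩ := hsurj b fun x hx => ((hb x).1 hx).1
  have hwu : E w u := by
    obtain ⟨w₁, hw₁u, _, -, hpw₁⟩ := hrel p hpf
    rwa [(hpwb.inj hpw₁).1]
  have happly_eq : ∀ q y, E q f → OPA E q w y → y = b := by
    intro q y hqf hqwy
    obtain ⟨r, -, hr⟩ := hfun w hwu
    obtain rfl : q = p := (hr q ⟨hqf, y, hqwy⟩).trans (hr p ⟨hpf, b, hpwb⟩).symm
    exact (hqwy.inj hpwb).2
  have hdiag : Diagonal E f w ↔ ¬ E w b :=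
    ⟨fun h => h p b hpf hpwb, fun h q y hqf hqwy => happly_eq q y hqf hqwy ▸ h⟩
  exact iff_not_self ((hb w).trans ((and_iff_right hwu).trans hdiag))

end Cantor

namespace GraphFormula

variable {α V : Type*} {E : V → V → Prop} {k : ℕ}

def liftVar (a : α ⊕ Fin k) : α ⊕ Fin (k + 1) := Sum.map id Fin.castSucc a

def newVar : α ⊕ Fin (k + 1) := Sum.inr (Fin.last k)

@[simp] theorem elim_snoc_liftVar (val : α → V) (xs : Fin k → V) (x : V) (a : α ⊕ Fin k) :
    Sum.elim val (Fin.snoc xs x) (liftVar a) = Sum.elim val xs a := by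
  cases a <;> simp [liftVar]

@[simp] theorem elim_snoc_newVar (val : α → V) (xs : Fin k → V) (x : V) :
    Sum.elim val (Fin.snoc xs x) (newVar : α ⊕ Fin (k + 1)) = x := by
  simp [newVar]

def mem (a b : α ⊕ Fin k) : Language.graph.BoundedFormula α k :=
  Relations.boundedFormula₂ adj (Term.var a) (Term.var b)

def eq (a b : α ⊕ Fin k) : Language.graph.BoundedFormula α k :=
  Term.bdEqual (Term.var a) (Term.var b)

def inNbrsEqSingleton (t a : α ⊕ Fin k) : Language.graph.BoundedFormula α k :=
  BoundedFormula.all ((mem newVar (liftVar t)).iff (eq newVar (liftVar a)))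

def inNbrsEqPair (t a b : α ⊕ Fin k) : Language.graph.BoundedFormula α k :=
  BoundedFormula.all
    ((mem newVar (liftVar t)).iff (eq newVar (liftVar a) ⊔ eq newVar (liftVar b)))

def sin (d a : α ⊕ Fin k) : Language.graph.BoundedFormula α k :=
  inNbrsEqSingleton d a ⊓
    BoundedFormula.all ((inNbrsEqSingleton newVar (liftVar a)).imp (eq newVar (liftVar d)))

def dou (e a b : α ⊕ Fin k) : Language.graph.BoundedFormula α k :=
  inNbrsEqPair e a b ⊓
    BoundedFormula.all
      ((inNbrsEqPair newVar (liftVar a) (liftVar b)).imp (eq newVar (liftVar e)))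

def opa (p a b : α ⊕ Fin k) : Language.graph.BoundedFormula α k :=
  BoundedFormula.ex (BoundedFormula.ex
    (sin (liftVar newVar) (liftVar (liftVar a)) ⊓
      dou newVar (liftVar (liftVar a)) (liftVar (liftVar b)) ⊓
      dou (liftVar (liftVar p)) (liftVar newVar) newVar))

def diagonal (f x : α) : Language.graph.Formula α :=
  BoundedFormula.all (BoundedFormula.all
    ((mem (liftVar newVar) (Sum.inl f) ⊓ opa (liftVar newVar) (Sum.inl x) newVar).imp
      (mem (Sum.inl x) newVar).not))

section Realize

variable (val : α → V) (xs : Fin k → V)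

theorem realize_mem (a b : α ⊕ Fin k) :
    (letI := digraphStructure E; (mem a b).Realize val xs) ↔
      E (Sum.elim val xs a) (Sum.elim val xs b) :=
  Iff.rfl

theorem realize_eq (a b : α ⊕ Fin k) :
    (letI := digraphStructure E; (eq a b).Realize val xs) ↔
      Sum.elim val xs a = Sum.elim val xs b :=
  Iff.rfl

theorem realize_inNbrsEqSingleton (t a : α ⊕ Fin k) :
    (letI := digraphStructure E; (inNbrsEqSingleton t a).Realize val xs) ↔
      inNbrs E (Sum.elim val xs t) = {Sum.elim val xs a} := by
  simp [inNbrsEqSingleton, realize_mem, realize_eq, inNbrs, Set.ext_iff]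

theorem realize_inNbrsEqPair (t a b : α ⊕ Fin k) :
    (letI := digraphStructure E; (inNbrsEqPair t a b).Realize val xs) ↔
      inNbrs E (Sum.elim val xs t) = {Sum.elim val xs a, Sum.elim val xs b} := by
  simp [inNbrsEqPair, realize_mem, realize_eq, inNbrs, Set.ext_iff]

theorem realize_sin (d a : α ⊕ Fin k) :
    (letI := digraphStructure E; (sin d a).Realize val xs) ↔
      SIN E (Sum.elim val xs d) (Sum.elim val xs a) := by
  simp [sin, SIN, realize_inNbrsEqSingleton, realize_eq]

theorem realize_dou (e a b : α ⊕ Fin k) :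
    (letI := digraphStructure E; (dou e a b).Realize val xs) ↔
      DOU E (Sum.elim val xs e) (Sum.elim val xs a) (Sum.elim val xs b) := by
  simp [dou, DOU, realize_inNbrsEqPair, realize_eq]

theorem realize_opa (p a b : α ⊕ Fin k) :
    (letI := digraphStructure E; (opa p a b).Realize val xs) ↔
      OPA E (Sum.elim val xs p) (Sum.elim val xs a) (Sum.elim val xs b) := by
  simp [opa, OPA, realize_sin, realize_dou, and_assoc]

theorem realize_diagonal (f x : α) :
    (letI := digraphStructure E; (diagonal f x).Realize val) ↔ Diagonal E (val f) (val x) := by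
  simp [diagonal, Diagonal, Formula.Realize, realize_mem, realize_opa]

end Realize

end GraphFormula

theorem Extensive.exists_separation {V : Type*} {E : V → V → Prop} (hext : Extensive E)
    (ψ : Language.graph.Formula (Fin 3)) (a c : V) :
    ∃ b, ∀ x, E x b ↔ E x c ∧ (letI := digraphStructure E; ψ.Realize ![a, c, x]) := by
  let := digraphStructure E
  have h := hext 1 le_rfl ψ
  simp only [specSentence, Sentence.Realize, BoundedFormula.realize_alls,
    BoundedFormula.realize_ex, BoundedFormula.realize_all, BoundedFormula.realize_iff,
    BoundedFormula.realize_inf, BoundedFormula.realize_relabel, memBF,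
    BoundedFormula.realize_rel₂] at h
  obtain ⟨b, hb⟩ := h ![a, c]
  refine ⟨b, fun x => (hb x).trans (and_congr Iff.rfl (iff_of_eq ?_))⟩
  unfold Formula.Realize
  congr 1
  · funext t; fin_cases t <;> rfl
  · exact Subsingleton.elim _ _

theorem cantor_of_extensive_general {V : Type} (E : V → V → Prop)
    (hext : Extensive E) : ∀ u v : V, ¬ SUR E v u := by
  intro u f
  obtain ⟨b, hb⟩ := hext.exists_separation (GraphFormula.diagonal 0 2) f u
  exact not_SUR_of_diagonal fun x =>
    (hb x).trans (and_congr Iff.rfl (GraphFormula.realize_diagonal ![f, u, x] 0 2))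

/-- Cantor's theorem holds in every extensive digraph: if the
axiom schema of specification holds in the digraph `D = (V, E)`, then for no
`u, v ∈ V` does `SUR(v; u)` hold. -/
theorem cantor_of_extensive {V : Type} [Nonempty V] (E : V → V → Prop)
    (hext : Extensive E) : ∀ u v : V, ¬ SUR E v u :=
  cantor_of_extensive_general E hext
end

section
/- Cantor's theorem holds in every strongly extensive digraph: if D = (V, E) is a strongly extensive digraph, then for no u, v ∈ V does SUR(v; u) hold. -/
/-- Ordered pairs in a digraph are uniquely determined: if `p` codes both
`⟨w, w'⟩_D` and `⟨x, y⟩_D`, then `w = x` and `w' = y`. -/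
lemma opa_inj {V : Type*} (E : V → V → Prop) {p w w' x y : V}
    (h1 : OPA E p w w') (h2 : OPA E p x y) : w = x ∧ w' = y := by
  obtain ⟨d, e, ⟨hd1, _⟩, ⟨he1, _⟩, ⟨hp1, _⟩⟩ := h1
  obtain ⟨d', e', ⟨hd1', _⟩, ⟨he1', _⟩, ⟨hp1', _⟩⟩ := h2
  have hset : ({d, e} : Set V) = {d', e'} := hp1.symm.trans hp1'
  rcases Set.pair_eq_pair_iff.mp hset with ⟨hdd, hee⟩ | ⟨hde, hed⟩
  · subst hdd; subst hee
    have hwx : w = x := by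
      have := hd1.symm.trans hd1'
      simpa using this
    subst hwx
    have hpair : ({w, w'} : Set V) = {w, y} := by
      rw [← he1, he1']
    rcases Set.pair_eq_pair_iff.mp hpair with ⟨_, h⟩ | ⟨h1, h2⟩
    · exact ⟨rfl, h⟩
    · exact ⟨rfl, h2.trans h1⟩
  · subst hde; subst hed
    have h1 : ({w} : Set V) = {x, y} := hd1.symm.trans he1'
    have hx : x = w := by have : x ∈ ({w} : Set V) := by rw [h1]; simp
                          simpa using this
    have hy : y = w := by have : y ∈ ({w} : Set V) := by rw [h1]; simp
                          simpa using this
    have h2 : ({w, w'} : Set V) = {x} := he1.symm.trans hd1'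
    have hw' : w' = x := by have : w' ∈ ({x} : Set V) := by rw [← h2]; simp
                            simpa using this
    exact ⟨hx.symm, hw'.trans (hx.trans hy.symm)⟩

/-- Cantor's theorem holds in every strongly extensive digraph:
if `D = (V, E)` is strongly extensive (for every `u ∈ V` and every `A ⊆ N(u)`
there is `v ∈ V` with `N(v) = A`), then for no `u, v ∈ V` does `SUR(v; u)` hold. -/
theorem cantor_of_stronglyExtensive {V : Type*} [Nonempty V] (E : V → V → Prop)
    (hse : ∀ u : V, ∀ A : Set V, A ⊆ inNbrs E u → ∃ v : V, inNbrs E v = A) :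
    ∀ u v : V, ¬ SUR E v u := by
  intro u v hsur
  obtain ⟨⟨hrel, hfun⟩, hsurj⟩ := hsur
  set A : Set V :=
    {w | w ∈ inNbrs E u ∧ ∀ p w', p ∈ inNbrs E v → OPA E p w w' → w ∉ inNbrs E w'} with hA
  obtain ⟨c, hc⟩ := hse u A (fun w hw => hw.1)
  obtain ⟨p, hp, w, hop⟩ := hsurj c (by rw [hc]; exact fun w hw => hw.1)
  obtain ⟨w₁, hw₁u, w₂, _, hop'⟩ := hrel p hp
  obtain ⟨hwx, hwy⟩ := opa_inj E hop hop'
  subst hwx; subst hwy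
  by_cases hwA : w ∈ A
  · have hwc : w ∈ inNbrs E c := by rw [hc]; exact hwA
    exact hwA.2 p c hp hop hwc
  · have : ∃ p' w', p' ∈ inNbrs E v ∧ OPA E p' w w' ∧ w ∈ inNbrs E w' := by
      by_contra hcon
      push_neg at hcon
      exact hwA ⟨hw₁u, fun p' w' h1 h2 => hcon p' w' h1 h2⟩
    obtain ⟨p', w', hp', hop'', hww'⟩ := this
    obtain ⟨q, _, huniq⟩ := hfun w hw₁u
    have hq1 : p' = q := huniq p' ⟨hp', w', hop''⟩
    have hq2 : p = q := huniq p ⟨hp, c, hop⟩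
    rw [hq1, ← hq2] at hop''
    have := (opa_inj E hop'' hop).2
    subst this
    rw [hc] at hww'
    exact hwA hww'
end

section
/- There exists a word φ over the alphabet 𝒜 that is a ZF sentence, has length |φ| = 494 and contains exactly one occurrence of the symbol ¬, such that for every digraph D = (V, E): D ⊨ φ if and only if D is Cantor, i.e., for no u, v ∈ V does SUR(v; u) hold. -/
/-- The alphabet `𝒜`: countably many variable symbols `x_i` together with the
eleven symbols `∈, =, ¬, →, ↔, ∧, ∨, ∃, ∀, (, )`. -/
inductive ZSym : Type
  | var : ℕ → ZSym   -- the variable `x_i`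
  | mem : ZSym       -- `∈`
  | eq : ZSym        -- `=`
  | neg : ZSym       -- `¬`
  | imp : ZSym       -- `→`
  | iff : ZSym       -- `↔`
  | and : ZSym       -- `∧`
  | or : ZSym        -- `∨`
  | ex : ZSym        -- `∃`
  | all : ZSym       -- `∀`
  | lp : ZSym        -- `(`
  | rp : ZSym        -- `)`
  deriving DecidableEq

/-- A word over `𝒜` is a finite sequence of symbols. -/
abbrev ZWord : Type := List ZSym

/-- The atomic ZF formula `(x_i ∈ x_j)`. -/
def memAtom (i j : ℕ) : ZWord := [ZSym.lp, ZSym.var i, ZSym.mem, ZSym.var j, ZSym.rp]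

/-- The atomic ZF formula `(x_i = x_j)`. -/
def eqAtom (i j : ℕ) : ZWord := [ZSym.lp, ZSym.var i, ZSym.eq, ZSym.var j, ZSym.rp]

/-- `u` is an atomic ZF formula: `(x_i ∈ x_j)` or `(x_i = x_j)`. -/
def IsAtomicZF (u : ZWord) : Prop := ∃ i j : ℕ, u = memAtom i j ∨ u = eqAtom i j

/-- The word `¬v`. -/
def negW (v : ZWord) : ZWord := ZSym.neg :: v
/-- The word `(v → w)`. -/
def impW (v w : ZWord) : ZWord := [ZSym.lp] ++ v ++ [ZSym.imp] ++ w ++ [ZSym.rp]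
/-- The word `(v ↔ w)`. -/
def iffW (v w : ZWord) : ZWord := [ZSym.lp] ++ v ++ [ZSym.iff] ++ w ++ [ZSym.rp]
/-- The word `(v ∧ w)`. -/
def andW (v w : ZWord) : ZWord := [ZSym.lp] ++ v ++ [ZSym.and] ++ w ++ [ZSym.rp]
/-- The word `(v ∨ w)`. -/
def orW (v w : ZWord) : ZWord := [ZSym.lp] ++ v ++ [ZSym.or] ++ w ++ [ZSym.rp]
/-- The word `(∃x_k v)`. -/
def exW (k : ℕ) (v : ZWord) : ZWord := [ZSym.lp, ZSym.ex, ZSym.var k] ++ v ++ [ZSym.rp]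
/-- The word `(∀x_k v)`. -/
def allW (k : ℕ) (v : ZWord) : ZWord := [ZSym.lp, ZSym.all, ZSym.var k] ++ v ++ [ZSym.rp]

/-- `s : Fin n → ZWord` is a generating sequence: every entry is an atomic ZF
formula or is built from earlier entries by one of the seven formation rules. -/
def IsGenSeq {n : ℕ} (s : Fin n → ZWord) : Prop :=
  ∀ i : Fin n, IsAtomicZF (s i) ∨
    (∃ j : Fin n, j < i ∧ s i = negW (s j)) ∨
    (∃ j j' : Fin n, j < i ∧ j' < i ∧ s i = impW (s j) (s j')) ∨
    (∃ j j' : Fin n, j < i ∧ j' < i ∧ s i = iffW (s j) (s j')) ∨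
    (∃ j j' : Fin n, j < i ∧ j' < i ∧ s i = andW (s j) (s j')) ∨
    (∃ j j' : Fin n, j < i ∧ j' < i ∧ s i = orW (s j) (s j')) ∨
    (∃ j : Fin n, ∃ k : ℕ, j < i ∧ s i = exW k (s j)) ∨
    (∃ j : Fin n, ∃ k : ℕ, j < i ∧ s i = allW k (s j))

/-- `u` is a ZF formula: it is the last entry of some generating sequence. -/
def IsZF (u : ZWord) : Prop :=
  ∃ n : ℕ, ∃ s : Fin (n + 1) → ZWord, IsGenSeq s ∧ s (Fin.last n) = u

/-- The occurrence at (0-indexed) position `p` in the word `u` is a bound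
occurrence of the variable `x_i`: it lies in a contiguous subword of `u` that is
a ZF formula of the form `(∃x_i v)` or `(∀x_i v)`. -/
def BoundOcc (u : ZWord) (p i : ℕ) : Prop :=
  ∃ a b : ℕ, a ≤ p ∧ p < a + b ∧
    ∃ v : ZWord, IsZF v ∧
      ((u.drop a).take b = exW i v ∨ (u.drop a).take b = allW i v)

/-- `u` is a ZF sentence: a ZF formula with no free occurrence of any variable. -/
def IsSentenceZF (u : ZWord) : Prop :=
  IsZF u ∧ ∀ p i : ℕ, u[p]? = some (ZSym.var i) → BoundOcc u p i

/-- `S` is an adequate (Tarskian) satisfaction relation for the digraph `(V, E)`: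
`S u f` plays the role of `D ⊨_f u` and satisfies the standard recursive clauses
on all ZF formulas; realizations are maps `f : ℕ → V`, with `f i` the value of
the variable `x_i`. -/
def Adequate {V : Type*} (E : V → V → Prop) (S : ZWord → (ℕ → V) → Prop) : Prop :=
  (∀ (i j : ℕ) (f : ℕ → V), S (memAtom i j) f ↔ E (f i) (f j)) ∧
  (∀ (i j : ℕ) (f : ℕ → V), S (eqAtom i j) f ↔ f i = f j) ∧
  (∀ v : ZWord, IsZF v → ∀ f : ℕ → V, S (negW v) f ↔ ¬ S v f) ∧
  (∀ v w : ZWord, IsZF v → IsZF w → ∀ f : ℕ → V, S (impW v w) f ↔ (S v f → S w f)) ∧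
  (∀ v w : ZWord, IsZF v → IsZF w → ∀ f : ℕ → V, S (iffW v w) f ↔ (S v f ↔ S w f)) ∧
  (∀ v w : ZWord, IsZF v → IsZF w → ∀ f : ℕ → V, S (andW v w) f ↔ (S v f ∧ S w f)) ∧
  (∀ v w : ZWord, IsZF v → IsZF w → ∀ f : ℕ → V, S (orW v w) f ↔ (S v f ∨ S w f)) ∧
  (∀ (v : ZWord) (k : ℕ), IsZF v → ∀ f : ℕ → V,
    S (exW k v) f ↔ ∃ a : V, S v (Function.update f k a)) ∧
  (∀ (v : ZWord) (k : ℕ), IsZF v → ∀ f : ℕ → V,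
    S (allW k v) f ↔ ∀ a : V, S v (Function.update f k a))

/-!
Take `φ` to be the word of the formula `∀x₁ ∀x₂ ¬ SUR(x₂; x₁)`, in which `SIN`, `DOU`, `OPA`,
`REL`, `FUN` and `SUR` are spelled out with nested quantifiers over auxiliary variables
(`∃! p, P p` becoming `∃x ∀y (P y ↔ y = x)`). Working with a deep embedding of formulas, every
adequate satisfaction relation agrees on formula words with Tarskian evaluation, so the
semantic claim reduces to unfolding the definitions. That `φ` is a ZF sentence follows by
induction on formulas: each variable occurrence is either free in the formula or lies inside a
quantified subformula binding it. Length and the number of `¬` are computed.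
-/

theorem forall_iff_eq_iff {α : Sort*} {P : α → Prop} {d : α} :
    (∀ a, P a ↔ a = d) ↔ P d ∧ ∀ a, P a → a = d :=
  ⟨fun h => ⟨(h d).2 rfl, fun a => (h a).1⟩, fun ⟨hd, h⟩ a => ⟨h a, fun ha => ha ▸ hd⟩⟩

namespace ZF

inductive Formula : Type
  | mem (i j : ℕ)
  | eq (i j : ℕ)
  | neg (v : Formula)
  | imp (v w : Formula)
  | iff (v w : Formula)
  | and (v w : Formula)
  | or (v w : Formula)
  | ex (k : ℕ) (v : Formula)
  | all (k : ℕ) (v : Formula)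

namespace Formula

def toWord : Formula → ZWord
  | mem i j => memAtom i j
  | eq i j => eqAtom i j
  | neg v => negW v.toWord
  | imp v w => impW v.toWord w.toWord
  | iff v w => iffW v.toWord w.toWord
  | and v w => andW v.toWord w.toWord
  | or v w => orW v.toWord w.toWord
  | ex k v => exW k v.toWord
  | all k v => allW k v.toWord

def Eval {V : Type*} (E : V → V → Prop) : Formula → (ℕ → V) → Prop
  | mem i j, f => E (f i) (f j)
  | eq i j, f => f i = f j
  | neg v, f => ¬ v.Eval E f
  | imp v w, f => v.Eval E f → w.Eval E f
  | iff v w, f => v.Eval E f ↔ w.Eval E f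
  | and v w, f => v.Eval E f ∧ w.Eval E f
  | or v w, f => v.Eval E f ∨ w.Eval E f
  | ex k v, f => ∃ a, v.Eval E (Function.update f k a)
  | all k v, f => ∀ a, v.Eval E (Function.update f k a)

def freeVars : Formula → Finset ℕ
  | mem i j | eq i j => {i, j}
  | neg v => v.freeVars
  | imp v w | iff v w | and v w | or v w => v.freeVars ∪ w.freeVars
  | ex k v | all k v => v.freeVars.erase k

end Formula

inductive FormationStep (P : ZWord → Prop) : ZWord → Prop
  | atom {u : ZWord} : IsAtomicZF u → FormationStep P u
  | neg {v : ZWord} : P v → FormationStep P (negW v)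
  | imp {v w : ZWord} : P v → P w → FormationStep P (impW v w)
  | iff {v w : ZWord} : P v → P w → FormationStep P (iffW v w)
  | and {v w : ZWord} : P v → P w → FormationStep P (andW v w)
  | or {v w : ZWord} : P v → P w → FormationStep P (orW v w)
  | ex {v : ZWord} (k : ℕ) : P v → FormationStep P (exW k v)
  | all {v : ZWord} (k : ℕ) : P v → FormationStep P (allW k v)

theorem FormationStep.mono {P Q : ZWord → Prop} (hPQ : ∀ v, P v → Q v) {u : ZWord}
    (h : FormationStep P u) : FormationStep Q u := by
  cases h with
  | atom h => exact .atom h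
  | neg hv => exact .neg (hPQ _ hv)
  | imp hv hw => exact .imp (hPQ _ hv) (hPQ _ hw)
  | iff hv hw => exact .iff (hPQ _ hv) (hPQ _ hw)
  | and hv hw => exact .and (hPQ _ hv) (hPQ _ hw)
  | or hv hw => exact .or (hPQ _ hv) (hPQ _ hw)
  | ex k hv => exact .ex k (hPQ _ hv)
  | all k hv => exact .all k (hPQ _ hv)

theorem isGenSeq_of_formationStep {n : ℕ} {s : Fin n → ZWord}
    (h : ∀ i, FormationStep (fun v => ∃ j < i, s j = v) (s i)) : IsGenSeq s := by
  intro i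
  have hi := h i
  generalize s i = u at hi ⊢
  cases hi <;> grind

inductive IsDerivation : List ZWord → Prop
  | nil : IsDerivation []
  | snoc {l : List ZWord} {u : ZWord} : IsDerivation l → FormationStep (· ∈ l) u →
      IsDerivation (l ++ [u])

namespace IsDerivation

theorem append {l₁ l₂ : List ZWord} (h₁ : IsDerivation l₁) (h₂ : IsDerivation l₂) :
    IsDerivation (l₁ ++ l₂) := by
  induction h₂ with
  | nil => simpa using h₁
  | snoc _ hu ih =>
    rw [← List.append_assoc]
    exact ih.snoc (hu.mono fun v hv => List.mem_append_right l₁ hv)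

theorem formationStep_getElem {l : List ZWord} (h : IsDerivation l) (i : ℕ)
    (hi : i < l.length) : FormationStep (· ∈ l.take i) l[i] := by
  induction h with
  | nil => simp at hi
  | @snoc l u _ hu ih =>
    rcases lt_or_eq_of_le (Nat.le_of_lt_succ (by simpa using hi)) with hi | rfl
    · simpa [List.getElem_append_left hi, List.take_append_of_le_length hi.le] using ih hi
    · simpa using hu

theorem isZF {l : List ZWord} {u : ZWord} (h : IsDerivation (l ++ [u])) : IsZF u := by
  set L := l ++ [u]
  have hL : L.length = l.length + 1 := by simp [L]
  refine ⟨l.length, fun i => L[i.val], isGenSeq_of_formationStep fun i => ?_, by simp [L]⟩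
  refine (h.formationStep_getElem i (by omega)).mono fun v hv => ?_
  obtain ⟨j, hj, rfl⟩ := List.getElem_of_mem hv
  have hji : j < i := by rw [List.length_take] at hj; omega
  exact ⟨⟨j, by omega⟩, hji, by simp⟩

end IsDerivation

namespace Formula

def subwords : Formula → List ZWord
  | mem _ _ | eq _ _ => []
  | neg v | ex _ v | all _ v => v.subwords ++ [v.toWord]
  | imp v w | iff v w | and v w | or v w => v.subwords ++ [v.toWord] ++ (w.subwords ++ [w.toWord])

theorem isDerivation_subwords (ψ : Formula) : IsDerivation (ψ.subwords ++ [ψ.toWord]) := by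
  induction ψ with
  | mem i j => exact IsDerivation.nil.snoc (.atom ⟨i, j, .inl rfl⟩)
  | eq i j => exact IsDerivation.nil.snoc (.atom ⟨i, j, .inr rfl⟩)
  | neg v ih => exact ih.snoc (.neg (by simp))
  | ex k v ih => exact ih.snoc (.ex k (by simp))
  | all k v ih => exact ih.snoc (.all k (by simp))
  | imp v w ihv ihw => exact (ihv.append ihw).snoc (.imp (by simp) (by simp))
  | iff v w ihv ihw => exact (ihv.append ihw).snoc (.iff (by simp) (by simp))
  | and v w ihv ihw => exact (ihv.append ihw).snoc (.and (by simp) (by simp))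
  | or v w ihv ihw => exact (ihv.append ihw).snoc (.or (by simp) (by simp))

theorem isZF (ψ : Formula) : IsZF ψ.toWord :=
  ψ.isDerivation_subwords.isZF

end Formula

theorem Adequate.iff_eval {V : Type*} {E : V → V → Prop} {S : ZWord → (ℕ → V) → Prop}
    (hS : Adequate E S) (ψ : Formula) (f : ℕ → V) : S ψ.toWord f ↔ ψ.Eval E f := by
  obtain ⟨hmem, heq, hneg, himp, hiff, hand, hor, hex, hall⟩ := hS
  induction ψ generalizing f <;> simp_all [Formula.toWord, Formula.Eval, Formula.isZF]

def BoundInEveryContext (u : ZWord) (p i : ℕ) : Prop :=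
  ∀ x y : ZWord, BoundOcc (x ++ u ++ y) (x.length + p) i

theorem BoundInEveryContext.append_right {u : ZWord} {p i : ℕ} (h : BoundInEveryContext u p i)
    (w : ZWord) : BoundInEveryContext (u ++ w) p i := fun x y => by
  simpa only [List.append_assoc] using h x (w ++ y)

theorem BoundInEveryContext.append_left {w : ZWord} {q i : ℕ} (h : BoundInEveryContext w q i)
    (u : ZWord) : BoundInEveryContext (u ++ w) (u.length + q) i := fun x y => by
  simpa only [List.append_assoc, List.length_append, Nat.add_assoc] using h (x ++ u) y

theorem boundInEveryContext_of_quant {u v : ZWord} {k p : ℕ} (hv : IsZF v)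
    (hu : u = exW k v ∨ u = allW k v) (hp : p < u.length) : BoundInEveryContext u p k :=
  fun x y => ⟨x.length, u.length, by omega, by omega, v, hv, by simpa using hu⟩

def VarsBoundOrIn (F : Finset ℕ) (u : ZWord) : Prop :=
  ∀ p i, u[p]? = some (.var i) → i ∈ F ∨ BoundInEveryContext u p i

namespace VarsBoundOrIn

theorem mono {F G : Finset ℕ} {u : ZWord} (h : VarsBoundOrIn F u) (hFG : F ⊆ G) :
    VarsBoundOrIn G u := fun p i hp => (h p i hp).imp_left (@hFG i)

theorem of_forall_var_mem {F : Finset ℕ} {u : ZWord} (h : ∀ i, ZSym.var i ∈ u → i ∈ F) :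
    VarsBoundOrIn F u := fun _ i hp => .inl (h i (List.mem_of_getElem? hp))

theorem append {F : Finset ℕ} {u w : ZWord} (hu : VarsBoundOrIn F u) (hw : VarsBoundOrIn F w) :
    VarsBoundOrIn F (u ++ w) := fun p i hp => by
  rcases lt_or_ge p u.length with hp' | hp'
  · rw [List.getElem?_append_left hp'] at hp
    exact (hu p i hp).imp_right (·.append_right w)
  · rw [List.getElem?_append_right hp'] at hp
    obtain ⟨q, rfl⟩ := Nat.exists_eq_add_of_le hp'
    rw [Nat.add_sub_cancel_left] at hp
    exact (hw q i hp).imp_right (·.append_left u)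

theorem binary {F G : Finset ℕ} {v w : ZWord} {m : ZSym} (hv : VarsBoundOrIn F v)
    (hw : VarsBoundOrIn G w) (hm : ∀ i, m ≠ .var i) :
    VarsBoundOrIn (F ∪ G) ([.lp] ++ v ++ [m] ++ w ++ [.rp]) := by
  refine .append (.append (.append (.append ?_ (hv.mono Finset.subset_union_left)) ?_)
    (hw.mono Finset.subset_union_right)) ?_ <;> refine of_forall_var_mem fun i hi => ?_
  · simp at hi
  · exact absurd (List.mem_singleton.mp hi).symm (hm i)
  · simp at hi

theorem quant {F : Finset ℕ} {u v : ZWord} {k : ℕ} (h : VarsBoundOrIn F v) (hv : IsZF v)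
    (hu : u = exW k v ∨ u = allW k v) : VarsBoundOrIn (F.erase k) u := fun p i hp => by
  have hk : VarsBoundOrIn (insert k F) u := by
    rcases hu with rfl | rfl <;>
      exact ((of_forall_var_mem (by simp)).append (h.mono (Finset.subset_insert k F))).append
        (of_forall_var_mem (by simp))
  rw [← Finset.erase_insert_eq_erase]
  by_cases hik : i = k
  · subst hik
    exact .inr (boundInEveryContext_of_quant hv hu (List.getElem?_eq_some_iff.mp hp).1)
  · exact (hk p i hp).imp_left (Finset.mem_erase_of_ne_of_mem hik)

theorem isSentenceZF {u : ZWord} (h : VarsBoundOrIn ∅ u) (hu : IsZF u) : IsSentenceZF u :=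
  ⟨hu, fun p i hp => by simpa using (h p i hp).resolve_left (Finset.notMem_empty i) [] []⟩

end VarsBoundOrIn

namespace Formula

theorem varsBoundOrIn_freeVars (ψ : Formula) : VarsBoundOrIn ψ.freeVars ψ.toWord := by
  induction ψ with
  | mem i j | eq i j => exact .of_forall_var_mem (by simp [toWord, freeVars, memAtom, eqAtom])
  | neg v ih => exact VarsBoundOrIn.append (u := [.neg]) (.of_forall_var_mem (by simp)) ih
  | imp v w ihv ihw | iff v w ihv ihw | and v w ihv ihw | or v w ihv ihw =>
    exact ihv.binary ihw (by simp)
  | ex k v ih => exact ih.quant v.isZF (.inl rfl)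
  | all k v ih => exact ih.quant v.isZF (.inr rfl)

theorem isSentenceZF {ψ : Formula} (h : ψ.freeVars = ∅) : IsSentenceZF ψ.toWord :=
  (h ▸ ψ.varsBoundOrIn_freeVars).isSentenceZF ψ.isZF

def nbrsEqSingletonF (t w v : ℕ) : Formula := all t (iff (mem t w) (eq t v))
def nbrsEqPairF (t u v w : ℕ) : Formula := all t (iff (mem t u) (or (eq t v) (eq t w)))
def nbrsSubsetF (t a b : ℕ) : Formula := all t (imp (mem t a) (mem t b))
def sinF (s t d v : ℕ) : Formula := all s (iff (nbrsEqSingletonF t s v) (eq s d))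
def douF (s t e v w : ℕ) : Formula := all s (iff (nbrsEqPairF t s v w) (eq s e))
/-- `x_p = {{x_a}, {x_a, x_b}}`, with `x₇ = {x_a}` and `x₈ = {x_a, x_b}`;
`x₉`, `x₁₀` are scratch variables. -/
def opaF (p a b : ℕ) : Formula :=
  ex 7 (ex 8 (and (sinF 9 10 7 a) (and (douF 9 10 8 a b) (douF 9 10 p 7 8))))

def relF : Formula :=
  all 3 (imp (mem 3 2)
    (ex 4 (and (mem 4 1) (ex 5 (and (nbrsSubsetF 6 5 1) (opaF 3 4 5))))))
def funClauseF : Formula :=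
  all 3 (imp (mem 3 1)
    (ex 4 (all 5 (iff (and (mem 5 2) (ex 6 (opaF 5 3 6))) (eq 5 4)))))
def surClauseF : Formula :=
  all 3 (imp (nbrsSubsetF 6 3 1) (ex 4 (and (mem 4 2) (ex 5 (opaF 4 5 3)))))
def surF : Formula := and relF (and funClauseF surClauseF)
def cantorF : Formula := all 1 (all 2 (neg surF))

section Eval

variable {V : Type*} {E : V → V → Prop}

theorem eval_nbrsEqSingletonF {t w v : ℕ} (hw : w ≠ t) (hv : v ≠ t) (f : ℕ → V) :
    (nbrsEqSingletonF t w v).Eval E f ↔ inNbrs E (f w) = {f v} := by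
  simp [nbrsEqSingletonF, Eval, hw, hv, Set.ext_iff, inNbrs]

theorem eval_nbrsEqPairF {t u v w : ℕ} (hu : u ≠ t) (hv : v ≠ t) (hw : w ≠ t)
    (f : ℕ → V) :
    (nbrsEqPairF t u v w).Eval E f ↔ inNbrs E (f u) = {f v, f w} := by
  simp [nbrsEqPairF, Eval, hu, hv, hw, Set.ext_iff, inNbrs]

theorem eval_nbrsSubsetF {t a b : ℕ} (ha : a ≠ t) (hb : b ≠ t) (f : ℕ → V) :
    (nbrsSubsetF t a b).Eval E f ↔ inNbrs E (f a) ⊆ inNbrs E (f b) := by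
  simp [nbrsSubsetF, Eval, ha, hb, Set.subset_def, inNbrs]

theorem eval_sinF {s t d v : ℕ} (hst : s ≠ t) (hvt : v ≠ t) (hvs : v ≠ s) (hds : d ≠ s)
    (f : ℕ → V) : (sinF s t d v).Eval E f ↔ SIN E (f d) (f v) := by
  simp [sinF, Eval, eval_nbrsEqSingletonF hst hvt, hvs, hds, SIN, forall_iff_eq_iff]

theorem eval_douF {s t e v w : ℕ} (hst : s ≠ t) (hvt : v ≠ t) (hwt : w ≠ t)
    (hvs : v ≠ s) (hws : w ≠ s) (hes : e ≠ s) (f : ℕ → V) :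
    (douF s t e v w).Eval E f ↔ DOU E (f e) (f v) (f w) := by
  simp [douF, Eval, eval_nbrsEqPairF hst hvt hwt, hvs, hws, hes, DOU, forall_iff_eq_iff]

theorem eval_opaF {p a b : ℕ} (hp : p < 7) (ha : a < 7) (hb : b < 7) (f : ℕ → V) :
    (opaF p a b).Eval E f ↔ OPA E (f p) (f a) (f b) := by
  simp (disch := omega) [opaF, Eval, OPA, eval_sinF, eval_douF, Function.update_of_ne]

theorem eval_relF (f : ℕ → V) : relF.Eval E f ↔ REL E (f 2) (f 1) := by
  simp [relF, Eval, eval_nbrsSubsetF, eval_opaF, REL, inNbrs]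

theorem eval_surF (f : ℕ → V) : surF.Eval E f ↔ SUR E (f 2) (f 1) := by
  simp [surF, funClauseF, surClauseF, Eval, eval_relF, eval_nbrsSubsetF, eval_opaF, SUR, FUN,
    inNbrs, forall_iff_eq_iff, ExistsUnique, and_assoc]

theorem eval_cantorF (f : ℕ → V) : cantorF.Eval E f ↔ ∀ u v : V, ¬ SUR E v u := by
  simp [cantorF, Eval, eval_surF]

end Eval

theorem freeVars_cantorF : cantorF.freeVars = ∅ := by decide

set_option maxRecDepth 2000 in
theorem length_toWord_cantorF : cantorF.toWord.length = 494 := rfl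

set_option maxRecDepth 8000 in
theorem count_neg_toWord_cantorF : cantorF.toWord.count .neg = 1 := rfl

end Formula

end ZF

/-- There is a ZF sentence `φ` over the alphabet `𝒜` of length
`494` containing exactly one occurrence of `¬` such that for every digraph
`D = (V, E)`: `D ⊨ φ` iff `D` is Cantor, i.e. for no `u, v ∈ V` does `SUR(v; u)`
hold. (Satisfaction `D ⊨ φ` is expressed via any adequate satisfaction relation;
since `φ` is a sentence its truth does not depend on the realization `f`.) -/
theorem exists_cantor_zf_sentence :
    ∃ φ : ZWord,
      IsSentenceZF φ ∧ φ.length = 494 ∧ φ.count ZSym.neg = 1 ∧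
      ∀ (V : Type) (E : V → V → Prop), Nonempty V →
        ∀ S : ZWord → (ℕ → V) → Prop, Adequate E S →
          ((∀ f : ℕ → V, S φ f) ↔ ∀ u v : V, ¬ SUR E v u) := by
  refine ⟨ZF.Formula.cantorF.toWord, ZF.Formula.isSentenceZF ZF.Formula.freeVars_cantorF,
    ZF.Formula.length_toWord_cantorF, ZF.Formula.count_neg_toWord_cantorF,
    fun V E ⟨v₀⟩ S hS => ?_⟩
  simp only [ZF.Adequate.iff_eval hS, ZF.Formula.eval_cantorF]
  exact ⟨fun h => h fun _ => v₀, fun h _ => h⟩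
end

section
/- Let V be a nonempty set and let D = (V, E) be the digraph whose only arrows are loops, i.e., E = {(u, u) : u ∈ V}. Then for every vertex u ∈ V, SUR(u; u) holds; in particular, D is not Cantor. -/
/-- In the digraph on a nonempty set `V` whose only arrows are
the loops (`E = {(u, u) : u ∈ V}`), `SUR(u; u)` holds for every vertex `u`; in
particular the digraph is not Cantor. -/
theorem loops_not_cantor {V : Type*} [Nonempty V]
    (E : V → V → Prop) (hE : ∀ a b : V, E a b ↔ a = b) :
    (∀ u : V, SUR E u u) ∧ ∃ u v : V, SUR E v u := by
  have hN : ∀ u : V, inNbrs E u = {u} := by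
    intro u; ext v; simp [inNbrs, hE]
  have hOPA : ∀ u : V, OPA E u u u := by
    intro u
    have hsin : SIN E u u := by
      constructor
      · simp [hN]
      · intro w hw
        simpa [hN, Set.singleton_eq_singleton_iff] using hw
    have hdou : DOU E u u u := by
      constructor
      · simp [hN]
      · intro t ht
        simp only [Set.pair_eq_singleton] at ht
        simpa [hN, Set.singleton_eq_singleton_iff] using ht
    exact ⟨u, u, hsin, hdou, hdou⟩
  have hsur : ∀ u : V, SUR E u u := by
    intro u
    refine ⟨⟨?_, ?_⟩, ?_⟩
    · intro w hw
      rw [hN] at hw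
      have hwu : w = u := hw
      subst hwu
      exact ⟨w, by simp [hN], w, by simp [hN], hOPA w⟩
    · intro w hw
      rw [hN] at hw
      have hwu : w = u := hw
      subst hwu
      refine ⟨w, ⟨by simp [hN], w, hOPA w⟩, ?_⟩
      intro p hp
      have := hp.1
      rw [hN] at this
      exact this
    · intro w' hw'
      have : w' = u := by
        have := hw' (by rw [hN]; rfl : w' ∈ inNbrs E w')
        rw [hN] at this; exact this
      subst this
      exact ⟨w', by simp [hN], w', hOPA w'⟩
  exact ⟨hsur, Classical.arbitrary V, Classical.arbitrary V, hsur _⟩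
end

section
/- Let u, v₁, …, v_k (k ≥ 1) be nonempty words over an alphabet A and let l_i, m_i ∈ ℕ for i = 1, …, k satisfy 1 ≤ l_i ≤ m_i ≤ |u| with the intervals [l_i, m_i] pairwise disjoint. Then the word sub₂(u, v₁, …, v_k, l₁, m₁, …, l_k, m_k), obtained by successively replacing for i = 1, 2, …, k the subword of u at positions [l_i, m_i] by v_i (updating positions after each replacement), is unchanged under any permutation of the triples ⟨v₁, l₁, m₁⟩, …, ⟨v_k, l_k, m_k⟩: for every permutation π of {1, …, k}, sub₂(u, v_{π(1)}, …, v_{π(k)}, l_{π(1)}, m_{π(1)}, …, l_{π(k)}, m_{π(k)}) = sub₂(u, v₁, …, v_k, l₁, m₁, …, l_k, m_k). -/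
variable {A : Type*}

/-- `rep u v l m`: replace in the word `u` the subword occupying the
(1-indexed) positions `l, l+1, …, m` by the word `v`. -/
def rep (u v : List A) (l m : ℕ) : List A :=
  u.take (l - 1) ++ v ++ u.drop m

/-- The action of `rep₀` on a recorded position pair: replacing the subword at
`[l, m]` by a word of length `vlen` leaves a pair `(l', m')` with `m' < l`
unchanged and shifts a pair with `l' > m` by `|v| - (m - l + 1)`. (For pairs
whose interval is disjoint from `[l, m]` exactly one of the two cases applies.) -/
def shiftTriple (l m vlen : ℕ) (t : List A × ℕ × ℕ) : List A × ℕ × ℕ :=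
  if t.2.2 < l then t
  else (t.1, t.2.1 - (m - l + 1) + vlen, t.2.2 - (m - l + 1) + vlen)

/-- `sub2 u ts`: successively perform the replacements recorded in the list of
triples `ts = [(v₁, l₁, m₁), …, (v_k, l_k, m_k)]`, in order, each time updating
the positions of the remaining triples as in `rep₀`. -/
def sub2 (u : List A) : List (List A × ℕ × ℕ) → List A
  | [] => u
  | (v, l, m) :: ts => sub2 (rep u v l m) (ts.map (shiftTriple l m v.length))
termination_by ts => ts.length
decreasing_by simp

lemma rep_length (u v : List A) (l m : ℕ) (h1 : l - 1 ≤ u.length) (h2 : m ≤ u.length) :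
    (rep u v l m).length = (l - 1) + v.length + (u.length - m) := by
  simp [rep]; omega

lemma rep_rep (u v1 v2 : List A) (l1 m1 l2 m2 : ℕ)
    (h1 : 1 ≤ l2) (h2 : l2 ≤ m2) (h3 : m2 < l1) (h4 : l1 ≤ m1) (h5 : m1 ≤ u.length) :
    rep (rep u v1 l1 m1) v2 l2 m2
      = rep (rep u v2 l2 m2) v1 (l1 - (m2 - l2 + 1) + v2.length)
          (m1 - (m2 - l2 + 1) + v2.length) := by
  have hA : (u.take (l1-1)).length = l1 - 1 := by simp; omega
  have hB : (u.take (l2-1)).length = l2 - 1 := by simp; omega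
  unfold rep
  rw [List.take_append_of_le_length (by rw [List.length_append, hA]; omega),
      List.take_append_of_le_length (by omega : l2 - 1 ≤ (u.take (l1-1)).length),
      List.take_take]
  rw [List.drop_append_of_le_length (by rw [List.length_append, hA]; omega),
      List.drop_append_of_le_length (by omega : m2 ≤ (u.take (l1-1)).length),
      List.drop_take]
  rw [List.take_append (l₁ := u.take (l2-1) ++ v2),
      List.take_of_length_le (l := u.take (l2-1) ++ v2)
        (by rw [List.length_append, hB]; omega),
      List.drop_append (l₁ := u.take (l2-1) ++ v2),
      List.drop_of_length_le (l := u.take (l2-1) ++ v2)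
        (by rw [List.length_append, hB]; omega)]
  rw [List.length_append, hB, List.drop_drop]
  have e1 : min (l2-1) (l1-1) = l2 - 1 := by omega
  have e2 : l1 - (m2 - l2 + 1) + v2.length - 1 - (l2 - 1 + v2.length) = l1 - 1 - m2 := by omega
  have e3 : m2 + (m1 - (m2 - l2 + 1) + v2.length - (l2 - 1 + v2.length)) = m1 := by omega
  rw [e1, e2, e3]
  simp [List.append_assoc]

lemma shiftTriple_fst (l m d : ℕ) (t : List A × ℕ × ℕ) :
    (shiftTriple l m d t).1 = t.1 := by
  unfold shiftTriple; split_ifs <;> rfl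

lemma shiftTriple_comm (l1 m1 l2 m2 d1 d2 : ℕ) (t : List A × ℕ × ℕ)
    (h1 : 1 ≤ l2) (h2 : l2 ≤ m2) (h3 : m2 < l1) (h4 : l1 ≤ m1)
    (ht0 : 1 ≤ t.2.1) (ht : t.2.1 ≤ t.2.2)
    (hd1 : m1 < t.2.1 ∨ t.2.2 < l1) (hd2 : m2 < t.2.1 ∨ t.2.2 < l2) :
    shiftTriple l2 m2 d2 (shiftTriple l1 m1 d1 t)
      = shiftTriple (l1 - (m2 - l2 + 1) + d2) (m1 - (m2 - l2 + 1) + d2) d1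
          (shiftTriple l2 m2 d2 t) := by
  obtain ⟨v, l', m'⟩ := t
  simp only [shiftTriple] at *
  split_ifs <;> simp_all <;> omega

theorem sub2_swap (u v1 v2 : List A) (l1 m1 l2 m2 : ℕ) (rest : List (List A × ℕ × ℕ))
    (h1 : 1 ≤ l2) (h2 : l2 ≤ m2) (h3 : m2 < l1) (h4 : l1 ≤ m1) (h5 : m1 ≤ u.length)
    (hrb : ∀ t ∈ rest, 1 ≤ t.2.1 ∧ t.2.1 ≤ t.2.2)
    (hr1 : ∀ t ∈ rest, m1 < t.2.1 ∨ t.2.2 < l1)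
    (hr2 : ∀ t ∈ rest, m2 < t.2.1 ∨ t.2.2 < l2) :
    sub2 u ((v1,l1,m1) :: (v2,l2,m2) :: rest) = sub2 u ((v2,l2,m2) :: (v1,l1,m1) :: rest) := by
  have hy : shiftTriple l1 m1 v1.length ((v2,l2,m2) : List A × ℕ × ℕ) = (v2,l2,m2) := by
    simp only [shiftTriple]; rw [if_pos]; exact h3
  have hx : shiftTriple l2 m2 v2.length ((v1,l1,m1) : List A × ℕ × ℕ)
      = (v1, l1 - (m2 - l2 + 1) + v2.length, m1 - (m2 - l2 + 1) + v2.length) := by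
    simp only [shiftTriple]; rw [if_neg]; omega
  rw [sub2, List.map_cons, hy, sub2, sub2, List.map_cons, hx, sub2]
  rw [rep_rep u v1 v2 l1 m1 l2 m2 h1 h2 h3 h4 h5]
  congr 1
  rw [List.map_map, List.map_map]
  apply List.map_congr_left
  intro t ht
  exact shiftTriple_comm l1 m1 l2 m2 v1.length v2.length t h1 h2 h3 h4
    (hrb t ht).1 (hrb t ht).2 (hr1 t ht) (hr2 t ht)

/-- Validity of a configuration. -/
def Valid (u : List A) (ts : List (List A × ℕ × ℕ)) : Prop :=
  (∀ t ∈ ts, t.1 ≠ []) ∧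
  (∀ t ∈ ts, 1 ≤ t.2.1 ∧ t.2.1 ≤ t.2.2 ∧ t.2.2 ≤ u.length) ∧
  ts.Pairwise (fun s t => s.2.2 < t.2.1 ∨ t.2.2 < s.2.1)

lemma valid_step (u v : List A) (l m : ℕ) (ts : List (List A × ℕ × ℕ))
    (h : Valid u ((v, l, m) :: ts)) :
    Valid (rep u v l m) (ts.map (shiftTriple l m v.length)) := by
  obtain ⟨hv, hb, hd⟩ := h
  have hvne : 1 ≤ v.length := by
    have := hv (v, l, m) (by simp); simpa [Nat.one_le_iff_ne_zero, List.length_eq_zero_iff] using this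
  have hb0 := hb (v, l, m) (by simp)
  simp only [List.mem_cons, forall_eq_or_imp] at hv hb
  rw [List.pairwise_cons] at hd
  have hlen : (rep u v l m).length = (l - 1) + v.length + (u.length - m) :=
    rep_length u v l m (by omega) (by omega)
  refine ⟨?_, ?_, ?_⟩
  · intro t ht
    simp only [List.mem_map] at ht
    obtain ⟨s, hs, rfl⟩ := ht
    rw [shiftTriple_fst]; exact hv.2 s hs
  · intro t ht
    simp only [List.mem_map] at ht
    obtain ⟨⟨vs, ls, ms⟩, hs, rfl⟩ := ht
    have hb0' : 1 ≤ l ∧ l ≤ m ∧ m ≤ u.length := hb0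
    have h1 : 1 ≤ ls ∧ ls ≤ ms ∧ ms ≤ u.length := hb.2 _ hs
    have h2 : m < ls ∨ ms < l := hd.1 _ hs
    simp only [shiftTriple]
    split_ifs <;> (try dsimp only) <;> omega
  · rw [List.pairwise_map]
    refine hd.2.imp_of_mem ?_
    rintro ⟨vs, ls, ms⟩ ⟨vt, lt, mt⟩ hs ht hr
    have hb0' : 1 ≤ l ∧ l ≤ m ∧ m ≤ u.length := hb0
    have h1 : 1 ≤ ls ∧ ls ≤ ms ∧ ms ≤ u.length := hb.2 _ hs
    have h2 : 1 ≤ lt ∧ lt ≤ mt ∧ mt ≤ u.length := hb.2 _ ht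
    have h3 : m < ls ∨ ms < l := hd.1 _ hs
    have h4 : m < lt ∨ mt < l := hd.1 _ ht
    have hr' : ms < lt ∨ mt < ls := hr
    simp only [shiftTriple]
    split_ifs <;> (try dsimp only) <;> omega

lemma valid_perm {u : List A} {ts ts' : List (List A × ℕ × ℕ)}
    (hp : ts'.Perm ts) (h : Valid u ts) : Valid u ts' := by
  obtain ⟨hv, hb, hd⟩ := h
  refine ⟨fun t ht => hv t (hp.mem_iff.mp ht), fun t ht => hb t (hp.mem_iff.mp ht), ?_⟩
  exact (hp.pairwise_iff (fun h => h.symm)).mpr hd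

lemma sub2_swap' (u : List A) (x y : List A × ℕ × ℕ) (rest : List (List A × ℕ × ℕ))
    (h : Valid u (x :: y :: rest)) :
    sub2 u (x :: y :: rest) = sub2 u (y :: x :: rest) := by
  obtain ⟨v1, l1, m1⟩ := x
  obtain ⟨v2, l2, m2⟩ := y
  obtain ⟨hv, hb, hd⟩ := h
  have hb1 := hb (v1,l1,m1) (by simp)
  have hb2 := hb (v2,l2,m2) (by simp)
  have hbr : ∀ t ∈ rest, 1 ≤ t.2.1 ∧ t.2.1 ≤ t.2.2 := by
    intro t ht; have := hb t (by simp [ht]); exact ⟨this.1, this.2.1⟩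
  rw [List.pairwise_cons] at hd
  rw [List.pairwise_cons] at hd
  have hd12 := hd.1 (v2,l2,m2) (by simp)
  have hr1 : ∀ t ∈ rest, m1 < t.2.1 ∨ t.2.2 < l1 := by
    intro t ht; have := hd.1 t (by simp [ht]); tauto
  have hr2 : ∀ t ∈ rest, m2 < t.2.1 ∨ t.2.2 < l2 := by
    intro t ht; have := hd.2.1 t ht; tauto
  rcases hd12 with h' | h'
  · -- m1 < l2
    exact (sub2_swap u v2 v1 l2 m2 l1 m1 rest hb1.1 hb1.2.1 h' hb2.2.1 hb2.2.2
      hbr hr2 hr1).symm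
  · -- m2 < l1
    exact sub2_swap u v1 v2 l1 m1 l2 m2 rest hb2.1 hb2.2.1 h' hb1.2.1 hb1.2.2
      hbr hr1 hr2

lemma sub2_bubble : ∀ (n : ℕ) (pre : List (List A × ℕ × ℕ)), pre.length ≤ n →
    ∀ (u : List A) (t : List A × ℕ × ℕ) (post : List (List A × ℕ × ℕ)),
    Valid u (pre ++ t :: post) →
    sub2 u (pre ++ t :: post) = sub2 u (t :: (pre ++ post)) := by
  intro n
  induction n with
  | zero =>
    intro pre hlen u t post _
    have : pre = [] := List.length_eq_zero_iff.mp (by omega)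
    subst this; rfl
  | succ n ih =>
    intro pre hlen u t post h
    cases pre with
    | nil => rfl
    | cons a pre' =>
      obtain ⟨va, la, ma⟩ := a
      have hval2 : Valid u ((va, la, ma) :: t :: (pre' ++ post)) :=
        valid_perm (List.Perm.cons _ List.perm_middle.symm) (by simpa using h)
      rw [List.cons_append, sub2, List.map_append, List.map_cons]
      rw [ih (List.map (shiftTriple la ma va.length) pre') (by simp at hlen ⊢; omega)
            (rep u va la ma) _ _ (by
              have := valid_step u va la ma (pre' ++ t :: post) (by simpa using h)
              simpa [List.map_append] using this)]
      rw [List.cons_append]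
      conv_rhs => rw [← sub2_swap' u (va, la, ma) t (pre' ++ post) hval2, sub2,
        List.map_cons, List.map_append]

lemma sub2_perm_aux : ∀ (n : ℕ) (u : List A) (ts ts' : List (List A × ℕ × ℕ)),
    ts.length ≤ n → ts'.Perm ts → Valid u ts → sub2 u ts' = sub2 u ts := by
  intro n
  induction n with
  | zero =>
    intro u ts ts' hlen hp _
    have : ts = [] := List.length_eq_zero_iff.mp (by omega)
    subst this
    rw [hp.eq_nil]
  | succ n ih =>
    intro u ts ts' hlen hp hval
    cases ts with
    | nil => rw [hp.eq_nil]
    | cons t ts₀ =>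
      obtain ⟨v, l, m⟩ := t
      have hmem : ((v,l,m) : List A × ℕ × ℕ) ∈ ts' := hp.mem_iff.mpr (by simp)
      obtain ⟨pre, post, rfl⟩ := List.append_of_mem hmem
      have hval' : Valid u (pre ++ (v,l,m) :: post) := valid_perm hp hval
      rw [sub2_bubble pre.length pre le_rfl u (v,l,m) post hval']
      rw [sub2, sub2]
      have hperm0 : (pre ++ post).Perm ts₀ := by
        have h1 : ((v,l,m) :: (pre ++ post)).Perm (pre ++ (v,l,m) :: post) :=
          List.perm_middle.symm
        exact ((h1.trans hp).cons_inv)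
      exact ih (rep u v l m) (ts₀.map (shiftTriple l m v.length))
        ((pre ++ post).map (shiftTriple l m v.length))
        (by simp at hlen ⊢; omega)
        (hperm0.map _)
        (valid_step u v l m ts₀ hval)

/-- If `u, v₁, …, v_k` (`k ≥ 1`) are nonempty words, each
interval `[l_i, m_i]` satisfies `1 ≤ l_i ≤ m_i ≤ |u|`, and the intervals are
pairwise disjoint, then `sub₂` is unchanged under any permutation of the
triples `(v_i, l_i, m_i)`. -/
theorem sub2_perm_invariant (u : List A) (hu : u ≠ [])
    (ts ts' : List (List A × ℕ × ℕ)) (hk : ts ≠ [])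
    (hv : ∀ t ∈ ts, t.1 ≠ [])
    (hlm : ∀ t ∈ ts, 1 ≤ t.2.1 ∧ t.2.1 ≤ t.2.2 ∧ t.2.2 ≤ u.length)
    (hdisj : ts.Pairwise fun s t => s.2.2 < t.2.1 ∨ t.2.2 < s.2.1)
    (hperm : ts'.Perm ts) :
    sub2 u ts' = sub2 u ts :=
  sub2_perm_aux ts.length u ts ts' le_rfl hperm ⟨hv, hlm, hdisj⟩
end
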